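/- arXiv:2110.06129 — 2 statements merged into one kernel-verified Lean document; each statement's English description precedes it below -/
import Mathlib

section
/- For all natural numbers m, n, r ≥ 0, B_{n,r+m} = Σ_{k=0}^{m} (−1)^{m−k} s_r(m,k) · B_{n+k,r}, where s_r(m,k) is the (unsigned) r-Stirling number of the first kind. -/
open Finset

/-- Stirling numbers of the second kind. -/
def S2 : ℕ → ℕ → ℕ
  | 0, 0 => 1
  | 0, _ + 1 => 0
  | _ + 1, 0 => 0
  | n + 1, k + 1 => (k + 1) * S2 n (k + 1) + S2 n k

/-- Bell numbers. -/
def bell (n : ℕ) : ℕ := ∑ k ∈ Finset.range (n + 1), S2 n k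

/-- r-Stirling numbers of the second kind. -/
def rS2 (r : ℕ) : ℕ → ℕ → ℕ
  | 0, 0 => 1
  | 0, _ + 1 => 0
  | n + 1, 0 => r * rS2 r n 0
  | n + 1, k + 1 => rS2 r n k + (k + 1 + r) * rS2 r n (k + 1)

/-- Unsigned r-Stirling numbers of the first kind. -/
def rS1 (r : ℕ) : ℕ → ℕ → ℕ
  | 0, 0 => 1
  | 0, _ + 1 => 0
  | n + 1, 0 => (r + n) * rS1 r n 0
  | n + 1, k + 1 => rS1 r n k + (r + n) * rS1 r n (k + 1)

/-- r-Bell numbers for integer r. -/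
def rBell (n : ℕ) (r : ℤ) : ℤ :=
  ∑ j ∈ Finset.range (n + 1), (n.choose j : ℤ) * r ^ (n - j) * (bell j : ℤ)

/-- r-Bell numbers for natural r, via r-Stirling numbers. -/
def rBellNat (n r : ℕ) : ℕ := ∑ k ∈ Finset.range (n + 1), rS2 r n k

lemma S2_eq_zero : ∀ n k, n < k → S2 n k = 0
  | 0, 0, h => absurd h (by simp)
  | 0, _ + 1, _ => rfl
  | _ + 1, 0, h => absurd h (by simp)
  | n + 1, k + 1, h => by
    simp [S2, S2_eq_zero n (k+1) (by omega), S2_eq_zero n k (by omega)]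

lemma pascal_split (n k : ℕ) :
    ∑ j ∈ range (n + 2), (n+1).choose j * S2 j k
      = ∑ j ∈ range (n + 1), n.choose j * S2 j k
        + ∑ j ∈ range (n + 1), n.choose j * S2 (j + 1) k := by
  rw [Finset.sum_range_succ' (fun j => (n+1).choose j * S2 j k) (n+1)]
  simp only [Nat.choose_succ_succ, Nat.add_mul, Finset.sum_add_distrib,
    Nat.choose_zero_right, one_mul]
  rw [Finset.sum_range_succ' (fun j => n.choose j * S2 j k) n,
    Finset.sum_range_succ (fun j => n.choose (j+1) * S2 (j+1) k) n]
  simp [Nat.choose_succ_self]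
  omega

lemma S2_succ_succ (n : ℕ) : ∀ k, S2 (n + 1) (k + 1) = ∑ j ∈ range (n + 1), n.choose j * S2 j k := by
  induction n with
  | zero => intro k; cases k <;> simp [S2]
  | succ n ih =>
    intro k
    rw [pascal_split]
    cases k with
    | zero =>
      have hz : ∀ j ∈ range (n+1), n.choose j * S2 (j + 1) 0 = 0 := by
        intro j _; simp [S2]
      rw [Finset.sum_eq_zero hz, ← ih 0]
      simp [S2]
    | succ k =>
      have : ∑ j ∈ range (n + 1), n.choose j * S2 (j + 1) (k + 1)
          = (k+1) * ∑ j ∈ range (n + 1), n.choose j * S2 j (k+1)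
            + ∑ j ∈ range (n + 1), n.choose j * S2 j k := by
        rw [Finset.mul_sum, ← Finset.sum_add_distrib]
        refine Finset.sum_congr rfl fun j _ => ?_
        simp [S2]; ring
      rw [this, ← ih (k+1), ← ih k]
      simp [S2]; ring

lemma bell_eq_sum (j n : ℕ) (h : j ≤ n) : bell j = ∑ k ∈ range (n + 1), S2 j k := by
  unfold bell
  rw [← Finset.sum_range_add_sum_Ico _ (Nat.add_le_add_right h 1)]
  have : ∑ k ∈ Finset.Ico (j+1) (n+1), S2 j k = 0 :=
    Finset.sum_eq_zero fun k hk => S2_eq_zero j k (by simp at hk; omega)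
  omega

lemma bell_succ (n : ℕ) : bell (n + 1) = ∑ k ∈ range (n + 1), n.choose k * bell k := by
  unfold bell
  rw [Finset.sum_range_succ' (fun k => S2 (n+1) k) (n+1)]
  have h0 : S2 (n+1) 0 = 0 := by simp [S2]
  rw [h0, Nat.add_zero]
  have : ∑ k ∈ range (n + 1), S2 (n+1) (k+1)
      = ∑ k ∈ range (n + 1), ∑ j ∈ range (n + 1), n.choose j * S2 j k :=
    Finset.sum_congr rfl fun k _ => S2_succ_succ n k
  rw [this, Finset.sum_comm]
  refine Finset.sum_congr rfl fun j hj => ?_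
  rw [← Finset.mul_sum, ← bell_eq_sum j n (by simp at hj; omega)]
  rfl

lemma sum_choose_pow (N : ℕ) (s : ℤ) :
    ∑ t ∈ range (N + 1), (N.choose t : ℤ) * s ^ (N - t) = (s + 1) ^ N := by
  rw [← Finset.sum_range_reflect (fun t => (N.choose t : ℤ) * s ^ (N - t)) (N + 1)]
  rw [add_pow]
  refine Finset.sum_congr rfl fun j hj => ?_
  simp only [Finset.mem_range] at hj
  have h1 : N + 1 - 1 - j = N - j := by omega
  have h2 : N - (N - j) = j := by omega
  rw [h1, h2, Nat.choose_symm (by omega)]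
  ring

lemma choose_sum (n i : ℕ) (hi : i ≤ n) (s : ℤ) :
    ∑ j ∈ range (n + 1), ((n.choose j : ℤ) * (j.choose i : ℤ)) * s ^ (n - j)
      = (n.choose i : ℤ) * (s + 1) ^ (n - i) := by
  rw [← Finset.sum_range_add_sum_Ico _ (by omega : i ≤ n + 1)]
  have hz : ∑ j ∈ range i, ((n.choose j : ℤ) * (j.choose i : ℤ)) * s ^ (n - j) = 0 := by
    refine Finset.sum_eq_zero fun j hj => ?_
    simp only [Finset.mem_range] at hj
    rw [Nat.choose_eq_zero_of_lt hj]; ring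
  rw [hz, zero_add, Finset.sum_Ico_eq_sum_range]
  have : ∀ t ∈ range (n + 1 - i),
      ((n.choose (i + t) : ℤ) * ((i + t).choose i : ℤ)) * s ^ (n - (i + t))
        = (n.choose i : ℤ) * (((n - i).choose t : ℤ) * s ^ ((n - i) - t)) := by
    intro t ht
    simp only [Finset.mem_range] at ht
    have h1 : (n.choose (i + t)) * ((i + t).choose i) = n.choose i * (n - i).choose t := by
      rw [Nat.choose_mul (by omega)]
      congr 2
      omega
    have h2 : n - (i + t) = (n - i) - t := by omega
    rw [h2, ← Nat.cast_mul, h1]; push_cast; ring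
  rw [Finset.sum_congr rfl this, ← Finset.mul_sum]
  have h3 : n + 1 - i = (n - i) + 1 := by omega
  rw [h3, sum_choose_pow]

lemma bell_succ_pad (j n : ℕ) (h : j ≤ n) :
    (bell (j + 1) : ℤ) = ∑ i ∈ range (n + 1), (j.choose i : ℤ) * (bell i : ℤ) := by
  rw [← Finset.sum_range_add_sum_Ico _ (Nat.add_le_add_right h 1)]
  have hz : ∑ i ∈ Finset.Ico (j + 1) (n + 1), (j.choose i : ℤ) * (bell i : ℤ) = 0 := by
    refine Finset.sum_eq_zero fun i hi => ?_
    simp only [Finset.mem_Ico] at hi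
    rw [Nat.choose_eq_zero_of_lt (by omega)]; ring
  rw [hz, add_zero, bell_succ]
  push_cast; rfl

lemma rBell_shift (n : ℕ) (s : ℤ) :
    rBell (n + 1) s = s * rBell n s + rBell n (s + 1) := by
  have hA : ∑ j ∈ range (n + 1), (n.choose j : ℤ) * s ^ (n - j) * (bell (j + 1) : ℤ)
      = rBell n (s + 1) := by
    have step1 : ∀ j ∈ range (n + 1),
        (n.choose j : ℤ) * s ^ (n - j) * (bell (j + 1) : ℤ)
          = ∑ i ∈ range (n + 1),
              ((n.choose j : ℤ) * (j.choose i : ℤ)) * s ^ (n - j) * (bell i : ℤ) := by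
      intro j hj
      simp only [Finset.mem_range] at hj
      rw [bell_succ_pad j n (by omega), Finset.mul_sum]
      refine Finset.sum_congr rfl fun i _ => by ring
    rw [Finset.sum_congr rfl step1, Finset.sum_comm]
    unfold rBell
    refine Finset.sum_congr rfl fun i hi => ?_
    simp only [Finset.mem_range] at hi
    have : ∑ j ∈ range (n + 1), ((n.choose j : ℤ) * (j.choose i : ℤ)) * s ^ (n - j) * (bell i : ℤ)
        = (∑ j ∈ range (n + 1), ((n.choose j : ℤ) * (j.choose i : ℤ)) * s ^ (n - j)) * (bell i : ℤ) := by
      rw [Finset.sum_mul]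
    rw [this, choose_sum n i (by omega)]
  have hB : ∑ j ∈ range (n + 1), (n.choose (j + 1) : ℤ) * s ^ (n - j) * (bell (j + 1) : ℤ)
        + s ^ (n + 1) * (bell 0 : ℤ) = s * rBell n s := by
    unfold rBell
    rw [Finset.mul_sum]
    rw [Finset.sum_range_succ' (fun j => s * ((n.choose j : ℤ) * s ^ (n - j) * (bell j : ℤ))) n]
    rw [Finset.sum_range_succ (fun j => (n.choose (j + 1) : ℤ) * s ^ (n - j) * (bell (j + 1) : ℤ)) n]
    rw [Nat.choose_succ_self]
    push_cast
    rw [zero_mul, zero_mul, add_zero]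
    congr 1
    · refine Finset.sum_congr rfl fun j hj => ?_
      simp only [Finset.mem_range] at hj
      have : n - j = (n - (j + 1)) + 1 := by omega
      rw [this, pow_succ]
      ring
    · have : n - 0 = n := rfl
      rw [this, pow_succ']
      simp [mul_assoc]
  conv_lhs => rw [rBell]
  rw [Finset.sum_range_succ' (fun j => ((n+1).choose j : ℤ) * s ^ (n + 1 - j) * (bell j : ℤ)) (n + 1)]
  have split : ∀ j ∈ range (n + 1),
      ((n+1).choose (j+1) : ℤ) * s ^ (n + 1 - (j + 1)) * (bell (j + 1) : ℤ)
        = (n.choose j : ℤ) * s ^ (n - j) * (bell (j + 1) : ℤ)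
          + (n.choose (j + 1) : ℤ) * s ^ (n - j) * (bell (j + 1) : ℤ) := by
    intro j _
    have h1 : n + 1 - (j + 1) = n - j := by omega
    rw [h1, Nat.choose_succ_succ]
    push_cast; ring
  rw [Finset.sum_congr rfl split, Finset.sum_add_distrib, hA]
  simp only [Nat.choose_zero_right, Nat.cast_one, one_mul, Nat.sub_zero]
  rw [← hB]
  ring

lemma rS1_eq_zero (r : ℕ) : ∀ m k, m < k → rS1 r m k = 0
  | 0, 0, h => absurd h (by simp)
  | 0, _ + 1, _ => rfl
  | _ + 1, 0, h => absurd h (by simp)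
  | m + 1, k + 1, h => by
    simp [rS1, rS1_eq_zero r m k (by omega), rS1_eq_zero r m (k+1) (by omega)]

theorem rBell_add_param (m n r : ℕ) :
    rBell n (r + m)
      = ∑ k ∈ Finset.range (m + 1), (-1 : ℤ) ^ (m - k) * (rS1 r m k : ℤ) * rBell (n + k) r := by
  induction m generalizing n with
  | zero => simp [rS1]
  | succ m ih =>
    have hs : ((r : ℤ) + (m + 1 : ℕ)) = ((r : ℤ) + m) + 1 := by push_cast; ring
    have key : rBell n ((r : ℤ) + (m + 1 : ℕ))
        = rBell (n + 1) ((r : ℤ) + m) - ((r : ℤ) + m) * rBell n ((r : ℤ) + m) := by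
      rw [hs, rBell_shift n ((r : ℤ) + m)]
      ring
    rw [key, ih (n + 1), ih n]
    rw [Finset.sum_range_succ' (fun k => (-1 : ℤ) ^ (m + 1 - k) * (rS1 r (m+1) k : ℤ) * rBell (n + k) r) (m + 1)]
    have split : ∀ k ∈ range (m + 1),
        (-1 : ℤ) ^ (m + 1 - (k + 1)) * (rS1 r (m+1) (k+1) : ℤ) * rBell (n + (k + 1)) r
          = (-1 : ℤ) ^ (m - k) * (rS1 r m k : ℤ) * rBell (n + 1 + k) r
            + ((r : ℤ) + m) * ((-1 : ℤ) ^ (m - k) * (rS1 r m (k+1) : ℤ) * rBell (n + (k+1)) r) := by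
      intro k hk
      have h1 : m + 1 - (k + 1) = m - k := by omega
      have h2 : n + (k + 1) = n + 1 + k := by omega
      rw [h1, h2]
      show (-1 : ℤ) ^ (m - k) * ((rS1 r m k + (r + m) * rS1 r m (k+1) : ℕ) : ℤ) * _ = _
      push_cast
      ring
    rw [Finset.sum_congr rfl split, Finset.sum_add_distrib]
    have hrest : ∑ k ∈ range (m + 1),
          ((r : ℤ) + m) * ((-1 : ℤ) ^ (m - k) * (rS1 r m (k+1) : ℤ) * rBell (n + (k+1)) r)
        + (-1 : ℤ) ^ (m + 1 - 0) * (rS1 r (m+1) 0 : ℤ) * rBell (n + 0) r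
        = -(((r : ℤ) + m) * ∑ k ∈ range (m + 1), (-1 : ℤ) ^ (m - k) * (rS1 r m k : ℤ) * rBell (n + k) r) := by
      rw [Finset.mul_sum, ← Finset.sum_neg_distrib]
      rw [Finset.sum_range_succ (fun k => ((r : ℤ) + m) * ((-1 : ℤ) ^ (m - k) * (rS1 r m (k+1) : ℤ) * rBell (n + (k+1)) r)) m]
      rw [rS1_eq_zero r m (m+1) (by omega)]
      rw [Finset.sum_range_succ' (fun k => -(((r : ℤ) + m) * ((-1 : ℤ) ^ (m - k) * (rS1 r m k : ℤ) * rBell (n + k) r))) m]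
      have congr1 : ∀ k ∈ range m,
          ((r : ℤ) + m) * ((-1 : ℤ) ^ (m - k) * (rS1 r m (k+1) : ℤ) * rBell (n + (k+1)) r)
            = -(((r : ℤ) + m) * ((-1 : ℤ) ^ (m - (k+1)) * (rS1 r m (k+1) : ℤ) * rBell (n + (k+1)) r)) := by
        intro k hk
        simp only [Finset.mem_range] at hk
        have : m - k = (m - (k + 1)) + 1 := by omega
        rw [this, pow_succ]
        ring
      rw [Finset.sum_congr rfl congr1]
      show _ = _ + -(((r : ℤ) + m) * ((-1 : ℤ) ^ (m - 0) * _ * rBell (n + 0) r))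
      have h0 : (rS1 r (m+1) 0 : ℤ) = ((r : ℤ) + m) * (rS1 r m 0 : ℤ) := by
        show ((((r + m) * rS1 r m 0 : ℕ)) : ℤ) = _
        push_cast; ring
      rw [h0]
      have hm0 : m - 0 = m := rfl
      rw [hm0]
      have hsign : (-1 : ℤ) ^ (m + 1 - 0) = -(-1 : ℤ) ^ m := by
        have : m + 1 - 0 = m + 1 := rfl
        rw [this, pow_succ]; ring
      rw [hsign]
      push_cast
      ring
    rw [add_assoc, hrest]
    ring
end

section
/- For all natural numbers n ≥ 1, Σ_{k=0}^{n} S(n,k) (−1)^{k−1} D_{k−1} = B_{n−1}, where S(n,k) is the Stirling number of the second kind, D_j the derangement number (with D_{−1} interpreted via the case k=0 contributing S(n,0)·(−1)^{−1}·D_{−1} = 0 since S(n,0)=0 for n ≥ 1), and B_m the Bell number. -/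
open Finset

lemma S2_eq_zero_of_lt : ∀ {n k : ℕ}, n < k → S2 n k = 0 := by
  intro n
  induction n with
  | zero => intro k h; cases k with
    | zero => omega
    | succ k => rfl
  | succ n ih =>
    intro k h
    cases k with
    | zero => omega
    | succ k =>
      have h1 : n < k := by omega
      simp [S2, ih h1, ih (show n < k + 1 by omega)]

lemma key (j : ℕ) :
    (j : ℤ) * ((-1 : ℤ) ^ (j - 1) * (numDerangements (j - 1) : ℤ))
      + (-1 : ℤ) ^ j * (numDerangements j : ℤ) = 1 := by
  cases j with
  | zero => simp
  | succ m =>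
    simp only [Nat.add_sub_cancel]
    have h1 : ((-1 : ℤ)) ^ (m + 1) * (-1) ^ (m + 1) = 1 := by
      rw [← pow_add]; exact Even.neg_one_pow ⟨m + 1, by ring⟩
    push_cast
    linear_combination (-1 : ℤ) ^ (m + 1) * numDerangements_succ m + h1

theorem sum_stirling_derangement (n : ℕ) (hn : 1 ≤ n) :
    ∑ k ∈ Finset.range (n + 1),
        (S2 n k : ℤ) * (-1 : ℤ) ^ (k - 1) * (numDerangements (k - 1) : ℤ)
      = (bell (n - 1) : ℤ) := by
  obtain ⟨m, rfl⟩ : ∃ m, n = m + 1 := ⟨n - 1, by omega⟩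
  rw [Finset.sum_range_succ']
  simp only [Nat.add_sub_cancel, Nat.zero_sub]
  have h0 : S2 (m + 1) 0 = 0 := rfl
  rw [h0]
  simp only [Nat.cast_zero, zero_mul, mul_zero, add_zero]
  have hS : ∀ i, (S2 (m + 1) (i + 1) : ℤ)
      = ((i + 1 : ℕ) : ℤ) * S2 m (i + 1) + S2 m i := by
    intro i; simp only [S2]; push_cast; ring
  calc ∑ i ∈ Finset.range (m + 1),
        (S2 (m + 1) (i + 1) : ℤ) * (-1) ^ i * (numDerangements i : ℤ)
      = ∑ i ∈ Finset.range (m + 1),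
        ((((i + 1 : ℕ) : ℤ) * S2 m (i + 1)) * ((-1) ^ i * numDerangements i)
          + (S2 m i : ℤ) * ((-1) ^ i * numDerangements i)) := by
        refine Finset.sum_congr rfl fun i _ => ?_
        rw [hS]; ring
    _ = (∑ i ∈ Finset.range (m + 1),
          (((i + 1 : ℕ) : ℤ) * S2 m (i + 1)) * ((-1) ^ i * numDerangements i))
        + ∑ i ∈ Finset.range (m + 1),
          (S2 m i : ℤ) * ((-1) ^ i * numDerangements i) := Finset.sum_add_distrib
    _ = (∑ j ∈ Finset.range (m + 1),
          (j : ℤ) * S2 m j * ((-1) ^ (j - 1) * numDerangements (j - 1)))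
        + ∑ i ∈ Finset.range (m + 1),
          (S2 m i : ℤ) * ((-1) ^ i * numDerangements i) := by
        congr 1
        have := Finset.sum_range_succ'
          (fun j => (j : ℤ) * S2 m j * ((-1) ^ (j - 1) * numDerangements (j - 1))) (m + 1)
        rw [Finset.sum_range_succ] at this
        simp only [Nat.cast_zero, zero_mul, add_zero, Nat.add_sub_cancel,
          S2_eq_zero_of_lt (Nat.lt_succ_self m), Nat.cast_zero, mul_zero, zero_mul] at this
        rw [← this]
    _ = ∑ j ∈ Finset.range (m + 1),
          (S2 m j : ℤ) * ((j : ℤ) * ((-1) ^ (j - 1) * numDerangements (j - 1))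
            + (-1) ^ j * numDerangements j) := by
        rw [← Finset.sum_add_distrib]
        refine Finset.sum_congr rfl fun j _ => ?_
        ring
    _ = ∑ j ∈ Finset.range (m + 1), (S2 m j : ℤ) := by
        refine Finset.sum_congr rfl fun j _ => ?_
        rw [key]; ring
    _ = (bell m : ℤ) := by rw [bell]; push_cast; rfl
end
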